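/- Let γ1, γ2, b > 0 and suppose the controller gain satisfies 0 < kc < 2γ2·(2γ1 + γ2 + 2√(γ1(γ1 + γ2))). Then for every ζ > 0, the matrix A(ζ) = [[−γ1 − b·ζ, 0, kc], [b·ζ/2, −γ2, 0], [0, −1, 0]] is Hurwitz. In particular, this single gain bound, which is independent of b and of the reference value, guarantees local exponential stability of the linearization of the integral-controlled dimerization network around every positive equilibrium. -/

import Mathlib

/-- A real square matrix is Hurwitz if all of its eigenvalues over `ℂ` have
negative real part. -/
def IsHurwitz {n : ℕ} (A : Matrix (Fin n) (Fin n) ℝ) : Prop :=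
  ∀ μ ∈ spectrum ℂ (A.map Complex.ofReal), μ.re < 0

/-! The characteristic polynomial of `A(ζ)` is `μ³ + (γ1 + bζ + γ2) μ² + (γ1 + bζ) γ2 μ + kc bζ / 2`,
so by the Routh–Hurwitz criterion `A(ζ)` is Hurwitz iff `kc bζ / 2 < (γ1 + bζ + γ2)(γ1 + bζ) γ2`.
Writing `t = bζ`, this reads `kc / 2 < γ2 (t + 2γ1 + γ2 + γ1(γ1 + γ2) / t)`, and by AM–GM the
right-hand side is at least `γ2 (2γ1 + γ2 + 2√(γ1(γ1 + γ2)))` for every `t > 0`. -/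

theorem Complex.re_neg_of_cubic_eq_zero {p q r : ℝ} (hp : 0 < p) (hr : 0 < r) (hpqr : r < p * q)
    {z : ℂ} (hz : z ^ 3 + p * z ^ 2 + q * z + r = 0) : z.re < 0 := by
  have hq : 0 < q := pos_of_mul_pos_right (hr.trans hpqr) hp.le
  by_contra! hx
  obtain ⟨hre, him⟩ := Complex.ext_iff.mp hz
  simp only [Complex.add_re, Complex.add_im, Complex.mul_re, Complex.mul_im, Complex.ofReal_re,
    Complex.ofReal_im, pow_succ, pow_zero, one_mul, Complex.zero_re, Complex.zero_im] at hre him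
  ring_nf at hre him
  set x := z.re
  set y := z.im
  rcases eq_or_ne y 0 with hy | hy
  · rw [hy] at hre
    nlinarith [pow_nonneg hx 3, mul_nonneg hx hq.le, mul_nonneg (mul_nonneg hx hx) hp.le]
  · -- the imaginary part of the equation determines `y²`; substituting it into the real part
    -- leaves `-8x³ - 8px² - 2(p² + q)x + (r - pq) = 0`, impossible for `x ≥ 0`
    have hy2 : y ^ 2 = 2 * p * x + 3 * x ^ 2 + q := by
      have : y * (2 * p * x + 3 * x ^ 2 + q - y ^ 2) = 0 := by linear_combination him
      linarith [(mul_eq_zero.mp this).resolve_left hy]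
    rw [hy2] at hre
    nlinarith [pow_nonneg hx 3, mul_nonneg hx hq.le, mul_nonneg (mul_nonneg hx hx) hp.le,
      mul_nonneg hx (mul_pos hp hp).le]

theorem cubic_eq_zero_of_mem_spectrum {a g k d : ℝ} {μ : ℂ}
    (h : μ ∈ spectrum ℂ ((!![-a, 0, k; d, -g, 0; 0, -1, 0] : Matrix (Fin 3) (Fin 3) ℝ).map
      Complex.ofReal)) :
    μ ^ 3 + ((a + g : ℝ) : ℂ) * μ ^ 2 + ((a * g : ℝ) : ℂ) * μ + ((k * d : ℝ) : ℂ) = 0 := by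
  rw [spectrum.mem_iff, Matrix.isUnit_iff_isUnit_det, isUnit_iff_ne_zero, not_not,
    Algebra.algebraMap_eq_smul_one, Matrix.det_fin_three] at h
  simp at h
  push_cast
  linear_combination h

theorem gain_mul_lt_of_lt_gain_bound {γ1 γ2 kc t : ℝ} (hγ1 : 0 < γ1) (hγ2 : 0 < γ2) (ht : 0 < t)
    (hkc : kc < 2 * γ2 * (2 * γ1 + γ2 + 2 * Real.sqrt (γ1 * (γ1 + γ2)))) :
    kc * t / 2 < (γ1 + t + γ2) * ((γ1 + t) * γ2) := by
  set s := Real.sqrt (γ1 * (γ1 + γ2))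
  have hs : s ^ 2 = γ1 * (γ1 + γ2) := Real.sq_sqrt (by positivity)
  have amgm : 2 * s * t ≤ t ^ 2 + γ1 * (γ1 + γ2) := by nlinarith [sq_nonneg (t - s)]
  nlinarith [mul_lt_mul_of_pos_right hkc ht, mul_le_mul_of_nonneg_left amgm hγ2.le]

theorem stmt18 (γ1 γ2 b kc : ℝ) (hγ1 : 0 < γ1) (hγ2 : 0 < γ2) (hb : 0 < b)
    (hkc0 : 0 < kc)
    (hkc : kc < 2 * γ2 * (2 * γ1 + γ2 + 2 * Real.sqrt (γ1 * (γ1 + γ2)))) :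
    ∀ ζ : ℝ, 0 < ζ →
      IsHurwitz !![-γ1 - b * ζ, 0, kc; b * ζ / 2, -γ2, 0; 0, -1, 0] := by
  intro ζ hζ μ hμ
  have ht : 0 < b * ζ := mul_pos hb hζ
  have hchar := cubic_eq_zero_of_mem_spectrum (a := γ1 + b * ζ) (by simpa only [neg_add'] using hμ)
  refine Complex.re_neg_of_cubic_eq_zero (by positivity) (by positivity) ?_ hchar
  linarith [gain_mul_lt_of_lt_gain_bound hγ1 hγ2 ht hkc]
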